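/- arXiv:2108.04520 — 5 statements merged into one kernel-verified Lean document; each statement's English description precedes it below -/
import Mathlib

section
/- Let k be a natural number and let X_0, X_1, ..., X_k be independent random variables on a probability space, each uniformly distributed on the unit interval [0,1]. Let S be any random finite subset of {1, ..., k} (i.e., a measurable map from the sample space to subsets of {1,...,k}, with no restriction on how S depends on the X_i). Then the probability of the event {for all i ∈ S, X_0 > X_i} is at least 1/(k+1). -/
/-!
Since `S ω` avoids `0`, the event contains the event that `X 0` is the strict maximum of all the
`X i`. The joint law of `(X 0, …, X k)` is a product of copies of one atomless law, so almost surely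
the `X i` are pairwise distinct and one of them is the strict maximum, while by exchangeability
each `X j` is the strict maximum with the same probability; that probability is thus at least
`1 / (k + 1)`.
-/

open MeasureTheory ProbabilityTheory
open scoped ENNReal

theorem ProbabilityTheory.IndepFun.measure_eq_eq_zero {Ω α : Type*} [MeasurableSpace Ω]
    [MeasurableSpace α] [MeasurableEq α] {P : Measure Ω} [IsFiniteMeasure P] {X Y : Ω → α}
    (hX : Measurable X) (hY : Measurable Y) (hXY : IndepFun X Y P)
    (hY_atom : ∀ a, P (Y ⁻¹' {a}) = 0) : P {ω | X ω = Y ω} = 0 := by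
  have hslice (a : α) : Prod.mk a ⁻¹' Set.diagonal α = {a} := by
    ext b; simp [eq_comm]
  change P ((fun ω => (X ω, Y ω)) ⁻¹' Set.diagonal α) = 0
  rw [← Measure.map_apply (hX.prodMk hY) measurableSet_diagonal,
    (indepFun_iff_map_prod_eq_prod_map_map hX.aemeasurable hY.aemeasurable).1 hXY,
    Measure.prod_apply measurableSet_diagonal]
  simp [hslice, Measure.map_apply hY (measurableSet_singleton _), hY_atom]

theorem MeasureTheory.Measure.ae_injective_pi {ι α : Type*} [Fintype ι] [MeasurableSpace α]
    [MeasurableEq α] (μ : ι → Measure α) [∀ i, IsProbabilityMeasure (μ i)]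
    [∀ i, NullSingletonClass (μ i)] :
    ∀ᵐ x ∂Measure.pi μ, Function.Injective x := by
  have hcoord := iIndepFun_pi (μ := μ) (X := fun _ => id) fun _ => aemeasurable_id
  have htie (i j : ι) (hij : i ≠ j) : Measure.pi μ {x | x i = x j} = 0 :=
    (hcoord.indepFun hij).measure_eq_eq_zero (measurable_pi_apply i) (measurable_pi_apply j)
      fun a => by
        rw [(measurePreserving_eval μ j).measure_preimage
          (measurableSet_singleton a).nullMeasurableSet, measure_singleton]
  have hall : ∀ᵐ x ∂Measure.pi μ, ∀ i j, x i = x j → i = j := by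
    simp only [ae_all_iff]
    intro i j
    by_cases hij : i = j
    · exact .of_forall fun _ _ => hij
    · exact (measure_eq_zero_iff_ae_notMem.1 (htie i j hij)).mono fun x hx h => (hx h).elim
  exact hall.mono fun x hx i j => hx i j

section StrictMax

variable {ι α : Type*} [LinearOrder α]

def strictMaxAt (j : ι) : Set (ι → α) := {x | ∀ i ≠ j, x i < x j}

theorem measurableSet_strictMaxAt [Countable ι] [TopologicalSpace α] [MeasurableSpace α]
    [OpensMeasurableSpace α] [OrderClosedTopology α] [SecondCountableTopology α] (j : ι) :
    MeasurableSet (strictMaxAt (α := α) j) := by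
  simp only [strictMaxAt, Set.ofPred_forall]
  exact .iInter fun i => .iInter fun _ =>
    measurableSet_lt (measurable_pi_apply i) (measurable_pi_apply j)

theorem exists_mem_strictMaxAt_of_injective [Finite ι] [Nonempty ι] {x : ι → α}
    (hx : Function.Injective x) : ∃ j, x ∈ strictMaxAt j := by
  obtain ⟨j, hj⟩ := Finite.exists_max x
  exact ⟨j, fun i hij => (hj i).lt_of_ne (hx.ne hij)⟩

theorem preimage_piCongrLeft_strictMaxAt (σ : Equiv.Perm ι) (j : ι) :
    Equiv.piCongrLeft (fun _ => α) σ ⁻¹' strictMaxAt j = strictMaxAt (σ.symm j) := by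
  ext x
  simp only [strictMaxAt, Set.mem_preimage, Set.mem_ofPred_eq, Equiv.piCongrLeft_apply_eq_cast,
    cast_eq]
  exact σ.symm.forall_congr fun {i} => by rw [σ.symm.injective.ne_iff]

end StrictMax

namespace MeasureTheory.Measure

variable {ι α : Type*} [Fintype ι] [LinearOrder α] [MeasurableSpace α] (μ : Measure α)

theorem pi_strictMaxAt_eq [SigmaFinite μ] [DecidableEq ι] (i j : ι) :
    Measure.pi (fun _ : ι => μ) (strictMaxAt i) = Measure.pi (fun _ : ι => μ) (strictMaxAt j) := by
  have hswap := (measurePreserving_piCongrLeft (fun _ => μ) (Equiv.swap i j)).measure_preimage_equiv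
    (strictMaxAt j)
  rwa [MeasurableEquiv.coe_piCongrLeft, preimage_piCongrLeft_strictMaxAt, Equiv.symm_swap,
    Equiv.swap_apply_right] at hswap

theorem inv_card_le_pi_strictMaxAt [IsProbabilityMeasure μ] [MeasurableEq α]
    [NullSingletonClass μ] (j : ι) :
    (Fintype.card ι : ℝ≥0∞)⁻¹ ≤ Measure.pi (fun _ : ι => μ) (strictMaxAt j) := by
  classical
  have : Nonempty ι := ⟨j⟩
  rw [ENNReal.inv_le_iff_le_mul (by simp) (by simp)]
  calc 1 = Measure.pi (fun _ : ι => μ) Set.univ := measure_univ.symm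
    _ ≤ Measure.pi (fun _ : ι => μ) (⋃ i, strictMaxAt i) :=
      measure_mono_ae <| (ae_injective_pi _).mono fun x hx _ =>
        Set.mem_iUnion.2 (exists_mem_strictMaxAt_of_injective hx)
    _ ≤ ∑ i, Measure.pi (fun _ : ι => μ) (strictMaxAt i) := measure_iUnion_fintype_le _ _
    _ = Fintype.card ι * Measure.pi (fun _ : ι => μ) (strictMaxAt j) := by
      simp [pi_strictMaxAt_eq μ _ j]

end MeasureTheory.Measure

theorem stmt_1_general
    {Ω : Type*} [MeasurableSpace Ω] (P : Measure Ω) [IsProbabilityMeasure P]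
    (k : ℕ) (X : Fin (k + 1) → Ω → ℝ)
    (hmeas : ∀ i, Measurable (X i))
    (hindep : iIndepFun X P)
    (hunif : ∀ i, Measure.map (X i) P = volume.restrict (Set.Icc (0 : ℝ) 1))
    (S : Ω → Finset (Fin (k + 1)))
    (hS0 : ∀ ω, 0 ∉ S ω) :
    1 / (k + 1) ≤ P {ω | ∀ i ∈ S ω, X 0 ω > X i ω} := by
  set μ := volume.restrict (Set.Icc (0 : ℝ) 1)
  have : IsProbabilityMeasure μ := hunif 0 ▸ Measure.isProbabilityMeasure_map (hmeas 0).aemeasurable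
  set T : Ω → Fin (k + 1) → ℝ := fun ω i => X i ω
  have hlaw : P.map T = Measure.pi fun _ => μ := by
    rw [hindep.map_fun_eq_pi_map fun i => (hmeas i).aemeasurable]
    simp_rw [hunif]
  have hmono : T ⁻¹' strictMaxAt 0 ⊆ {ω | ∀ i ∈ S ω, X 0 ω > X i ω} :=
    fun ω hω i hi => hω i (ne_of_mem_of_not_mem hi (hS0 ω))
  calc 1 / (k + 1) = (Fintype.card (Fin (k + 1)) : ℝ≥0∞)⁻¹ := by simp
    _ ≤ Measure.pi (fun _ => μ) (strictMaxAt 0) := Measure.inv_card_le_pi_strictMaxAt μ 0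
    _ = P (T ⁻¹' strictMaxAt 0) := by
      rw [← hlaw, Measure.map_apply (measurable_pi_lambda _ hmeas) (measurableSet_strictMaxAt 0)]
    _ ≤ P {ω | ∀ i ∈ S ω, X 0 ω > X i ω} := measure_mono hmono

/-- if `X_0, …, X_k` are independent uniform-`[0,1]` random variables and
`S` is any measurable random subset of `{1, …, k}` (no restriction on how `S` depends on
the `X_i`), then the probability that `X_0 > X_i` for all `i ∈ S` is at least `1/(k+1)`.
The random subset is encoded by its membership events `{ω | i ∈ S ω}`. -/
theorem stmt_1
    {Ω : Type*} [MeasurableSpace Ω] (P : Measure Ω) [IsProbabilityMeasure P]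
    (k : ℕ) (X : Fin (k + 1) → Ω → ℝ)
    (hmeas : ∀ i, Measurable (X i))
    (hindep : iIndepFun X P)
    (hunif : ∀ i, Measure.map (X i) P = volume.restrict (Set.Icc (0 : ℝ) 1))
    (S : Ω → Finset (Fin (k + 1)))
    (hS0 : ∀ ω, 0 ∉ S ω)
    (hSmeas : ∀ i, MeasurableSet {ω | i ∈ S ω}) :
    1 / (k + 1) ≤ P {ω | ∀ i ∈ S ω, X 0 ω > X i ω} :=
  stmt_1_general P k X hmeas hindep hunif S hS0
end

section
/- Let k be a natural number and let X_0, X_1, ..., X_k be independent random variables on a probability space, each uniformly distributed on the unit interval [0,1]. Let S be a random subset of {1, ..., k} that is independent of the random vector (X_0, X_1, ..., X_k). Then the probability of the event {for all i ∈ S, X_0 > X_i} equals the expectation E[1/(|S|+1)], where |S| denotes the cardinality of S. -/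
/-! Because `S` is independent of `X`, the probability can be computed with `S` frozen to a fixed
set `s ∌ 0`, and then averaged over the law of `S`. For fixed `s`, `X 0` is independent of the
i.i.d. uniform family `(X i)_{i ∈ s}`, so conditionally on `X 0 = x` the event has probability
`x ^ |s|`, and `∫₀¹ x ^ |s| dx = 1 / (|s| + 1)`. -/

open MeasureTheory ProbabilityTheory
open scoped ENNReal

/-- Finsets of a type carry the discrete σ-algebra. -/
instance finsetMeasurableSpace {α : Type*} : MeasurableSpace (Finset α) := ⊤

open Finset

instance Finset.discreteMeasurableSpace {α : Type*} : DiscreteMeasurableSpace (Finset α) :=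
  ⟨fun _ => trivial⟩

section IndepFun

variable {Ω α β : Type*} [MeasurableSpace Ω] [MeasurableSpace α] [MeasurableSpace β]
  {P : Measure Ω} [IsFiniteMeasure P] {S : Ω → α} {Y : Ω → β}

theorem ProbabilityTheory.IndepFun.measure_prodMk_mem (hS : Measurable S) (hY : Measurable Y)
    (h : IndepFun S Y P) {D : Set (α × β)} (hD : MeasurableSet D) :
    P {ω | (S ω, Y ω) ∈ D} = ∫⁻ a, P.map Y (Prod.mk a ⁻¹' D) ∂(P.map S) :=
  calc P {ω | (S ω, Y ω) ∈ D} = P.map (fun ω => (S ω, Y ω)) D :=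
        (Measure.map_apply (hS.prodMk hY) hD).symm
    _ = _ := by
      rw [h.map_prod_eq_prod_map_map hS.aemeasurable hY.aemeasurable, Measure.prod_apply hD]

theorem ProbabilityTheory.IndepFun.measure_mem_of_discrete [Countable α]
    [DiscreteMeasurableSpace α] (hS : Measurable S) (hY : Measurable Y) (h : IndepFun S Y P)
    {B : α → Set β} (hB : ∀ a, MeasurableSet (B a)) :
    P {ω | Y ω ∈ B (S ω)} = ∫⁻ ω, P.map Y (B (S ω)) ∂P := by
  have hD : MeasurableSet {p : α × β | p.2 ∈ B p.1} := by
    have : {p : α × β | p.2 ∈ B p.1} = ⋃ a, {a} ×ˢ B a := by ext; simp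
    exact this ▸ .iUnion fun a => (measurableSet_singleton a).prod (hB a)
  exact (h.measure_prodMk_mem hS hY hD).trans (lintegral_map .of_discrete hS)

end IndepFun

theorem volume_restrict_unitInterval_Iio {x : ℝ} (hx : x ∈ Set.Icc (0 : ℝ) 1) :
    volume.restrict (Set.Icc (0 : ℝ) 1) (Set.Iio x) = ENNReal.ofReal x := by
  have : Set.Iio x ∩ Set.Icc 0 1 = Set.Ico 0 x := by
    ext y
    simp only [Set.mem_inter_iff, Set.mem_Iio, Set.mem_Icc, Set.mem_Ico]
    grind
  rw [Measure.restrict_apply measurableSet_Iio, this, Real.volume_Ico, sub_zero]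

theorem lintegral_volume_restrict_unitInterval_Iio_pow (m : ℕ) :
    ∫⁻ x, volume.restrict (Set.Icc (0 : ℝ) 1) (Set.Iio x) ^ m ∂volume.restrict (Set.Icc 0 1)
      = 1 / ((m : ℝ≥0∞) + 1) := by
  have hIio : ∀ x ∈ Set.Icc (0 : ℝ) 1,
      volume.restrict (Set.Icc (0 : ℝ) 1) (Set.Iio x) ^ m = ENNReal.ofReal (x ^ m) :=
    fun x hx => by rw [volume_restrict_unitInterval_Iio hx, ENNReal.ofReal_pow hx.1]
  have hint : ∫ x in (0 : ℝ)..1, x ^ m = 1 / ((m : ℝ) + 1) := by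
    rw [integral_pow]
    norm_num
  rw [setLIntegral_congr_fun measurableSet_Icc hIio,
    ← ofReal_integral_eq_lintegral_ofReal (continuous_pow m).integrableOn_Icc
      (ae_restrict_of_forall_mem measurableSet_Icc fun x hx => pow_nonneg hx.1 m),
    integral_Icc_eq_integral_Ioc, ← intervalIntegral.integral_of_le zero_le_one, hint,
    ENNReal.ofReal_div_of_pos (by positivity), ENNReal.ofReal_add (by positivity) zero_le_one]
  simp

theorem ProbabilityTheory.iIndepFun.measure_forall_lt_of_uniform {Ω ι : Type*}
    [MeasurableSpace Ω] {P : Measure Ω} [IsProbabilityMeasure P] {X : ι → Ω → ℝ}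
    (hmeas : ∀ i, Measurable (X i)) (hindep : iIndepFun X P)
    (hunif : ∀ i, P.map (X i) = volume.restrict (Set.Icc (0 : ℝ) 1))
    {i₀ : ι} {s : Finset ι} (hs : i₀ ∉ s) :
    P {ω | ∀ i ∈ s, X i ω < X i₀ ω} = 1 / ((#s : ℝ≥0∞) + 1) := by
  set Y : Ω → s → ℝ := fun ω i => X i ω
  have hY : Measurable Y := measurable_pi_iff.2 fun i => hmeas i
  have hlawY : P.map Y = Measure.pi fun _ : s => volume.restrict (Set.Icc (0 : ℝ) 1) :=
    (iIndepFun.map_fun_eq_pi_map (f := s.restrict X) (fun i => (hmeas i).aemeasurable)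
      (hindep.restrict s)).trans (by simp only [Finset.restrict, hunif])
  have hindep₀ : IndepFun (X i₀) Y P :=
    (hindep.indepFun_finset {i₀} s (disjoint_singleton_left.2 hs) hmeas).comp
      (measurable_pi_apply (⟨i₀, mem_singleton_self i₀⟩ : ({i₀} : Finset ι))) measurable_id
  have hD : MeasurableSet {p : ℝ × (s → ℝ) | ∀ i, p.2 i < p.1} :=
    measurableSet_setOfPred.2 (by fun_prop)
  have hslice : ∀ x : ℝ, Prod.mk x ⁻¹' {p : ℝ × (s → ℝ) | ∀ i, p.2 i < p.1}
      = Set.univ.pi fun _ => Set.Iio x := by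
    intro x; ext g; simp
  have hcond := hindep₀.measure_prodMk_mem (hmeas i₀) hY hD
  simp only [hslice, hlawY, Measure.pi_pi, prod_const, card_univ, Fintype.card_coe,
    hunif] at hcond
  rw [← lintegral_volume_restrict_unitInterval_Iio_pow, ← hcond]
  congr 1
  ext ω
  simp [Y]

/-- if `X_0, …, X_k` are independent uniform-`[0,1]` random variables and
`S` is a random subset of `{1, …, k}` that is independent of the random vector
`(X_0, …, X_k)`, then the probability that `X_0 > X_i` for all `i ∈ S` equals the
expectation `E[1/(|S|+1)]`. -/
theorem stmt_2
    {Ω : Type*} [MeasurableSpace Ω] (P : Measure Ω) [IsProbabilityMeasure P]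
    (k : ℕ) (X : Fin (k + 1) → Ω → ℝ)
    (hmeas : ∀ i, Measurable (X i))
    (hindep : iIndepFun X P)
    (hunif : ∀ i, Measure.map (X i) P = volume.restrict (Set.Icc (0 : ℝ) 1))
    (S : Ω → Finset (Fin (k + 1)))
    (hS0 : ∀ ω, 0 ∉ S ω)
    (hSmeas : Measurable S)
    (hSindep : IndepFun S (fun ω (i : Fin (k + 1)) => X i ω) P) :
    P {ω | ∀ i ∈ S ω, X 0 ω > X i ω}
      = ∫⁻ ω, 1 / (((S ω).card : ℝ≥0∞) + 1) ∂P := by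
  have hvec : Measurable fun ω (i : Fin (k + 1)) => X i ω := measurable_pi_iff.2 hmeas
  have hB : ∀ s : Finset (Fin (k + 1)),
      MeasurableSet {f : Fin (k + 1) → ℝ | ∀ i ∈ s, f i < f 0} :=
    fun _ => measurableSet_setOfPred.2 (by fun_prop)
  refine (hSindep.measure_mem_of_discrete hSmeas hvec hB).trans (lintegral_congr fun ω => ?_)
  rw [Measure.map_apply hvec (hB _)]
  exact hindep.measure_forall_lt_of_uniform hmeas hunif (hS0 ω)
end

section
/- Let m be a natural number and let X_0, X_1, X_2, ... be an infinite sequence of independent random variables on a probability space, each uniformly distributed on the unit interval [0,1]. Let S be a random finite subset of the positive integers such that (a) |S| ≤ m almost surely, and (b) for every i ≥ 1, the event {i ∈ S} is measurable with respect to the σ-algebra generated by X_1, ..., X_{i-1} (for i = 1, this σ-algebra is trivial, so the inclusion of 1 is deterministic). Then the probability of the event {for all i ∈ S, X_0 > X_i} is at least 1/(m+1). -/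
open MeasureTheory ProbabilityTheory
open scoped ENNReal

/-!
Let `E n` (`beatsUpTo`) be the event that `X 0` beats every threatener among `1, …, n`, and
`c n` (`countUpTo`) the number of those threateners. Membership of `n + 1` in `S` is decided
before the fresh uniform variable `X (n + 1)` is revealed, and a new threatener is beaten with
conditional probability `X 0`, exactly the factor it removes from `(X 0) ^ (m - c n)`. Hence
`𝟙_{E n} · (X 0) ^ (m - c n)` (`beatWeight`) has expectation independent of `n`. As `c n ≤ m`,
this gives `P (E n) ≥ 𝔼[(X 0) ^ m] = 1 / (m + 1)`, and the events `E n` decrease to the event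
in question.
-/

lemma volume_Iio_inter_Icc {y : ℝ} (hy : y ∈ Set.Icc (0 : ℝ) 1) :
    volume (Set.Iio y ∩ Set.Icc 0 1) = ENNReal.ofReal y := by
  rw [show Set.Iio y ∩ Set.Icc 0 1 = Set.Ico 0 y by
    ext x; simp only [Set.mem_inter_iff, Set.mem_Iio, Set.mem_Icc, Set.mem_Ico]; grind,
    Real.volume_Ico, sub_zero]

lemma lintegral_indicator_lt_of_indepFun {Ω : Type*} [MeasurableSpace Ω] {P : Measure Ω}
    [IsFiniteMeasure P] {B : Ω → ℝ≥0∞} {Y U : Ω → ℝ} (hB : Measurable B) (hY : Measurable Y)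
    (hU : Measurable U) (hind : IndepFun (fun ω => (B ω, Y ω)) U P)
    (hunif : P.map U = volume.restrict (Set.Icc 0 1)) (hY01 : ∀ᵐ ω ∂P, Y ω ∈ Set.Icc 0 1) :
    ∫⁻ ω, {ω | U ω < Y ω}.indicator B ω ∂P = ∫⁻ ω, B ω * ENNReal.ofReal (Y ω) ∂P := by
  set h : (ℝ≥0∞ × ℝ) × ℝ → ℝ≥0∞ := {q | q.2 < q.1.2}.indicator fun q => q.1.1
  have hh : Measurable h :=
    (measurable_fst.comp measurable_fst).indicator
      (measurableSet_lt measurable_snd (measurable_snd.comp measurable_fst))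
  have hBY : Measurable fun ω => (B ω, Y ω) := hB.prodMk hY
  calc ∫⁻ ω, {ω | U ω < Y ω}.indicator B ω ∂P
      = ∫⁻ p, h p ∂(P.map fun ω => ((B ω, Y ω), U ω)) := by
        rw [lintegral_map hh (hBY.prodMk hU)]; rfl
    _ = ∫⁻ b, ∫⁻ u, h (b, u) ∂(volume.restrict (Set.Icc 0 1)) ∂(P.map fun ω => (B ω, Y ω)) := by
        rw [hind.map_prod_eq_prod_map_map hBY.aemeasurable hU.aemeasurable, hunif,
          lintegral_prod _ hh.aemeasurable]
    _ = ∫⁻ b, b.1 * volume (Set.Iio b.2 ∩ Set.Icc 0 1) ∂(P.map fun ω => (B ω, Y ω)) := by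
        congr 1 with b
        rw [← Measure.restrict_apply measurableSet_Iio,
          ← lintegral_indicator_const measurableSet_Iio]
        rfl
    _ = ∫⁻ ω, B ω * ENNReal.ofReal (Y ω) ∂P := by
        have hvol : Measurable fun y : ℝ => volume (Set.Iio y ∩ Set.Icc 0 1) :=
          Monotone.measurable fun a b hab => measure_mono (Set.inter_subset_inter_left _
            (Set.Iio_subset_Iio hab))
        rw [lintegral_map (f := fun b : ℝ≥0∞ × ℝ => b.1 * volume (Set.Iio b.2 ∩ Set.Icc 0 1))
          (measurable_fst.mul (hvol.comp measurable_snd)) hBY]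
        refine lintegral_congr_ae ?_
        filter_upwards [hY01] with ω hω
        rw [volume_Iio_inter_Icc hω]

lemma lintegral_ofReal_pow_of_map_eq {Ω : Type*} [MeasurableSpace Ω] {P : Measure Ω}
    {U : Ω → ℝ} (hU : Measurable U) (hunif : P.map U = volume.restrict (Set.Icc 0 1)) (m : ℕ) :
    ∫⁻ ω, ENNReal.ofReal (U ω) ^ m ∂P = 1 / (m + 1) := by
  rw [← lintegral_map (f := fun x => ENNReal.ofReal x ^ m) (by fun_prop) hU, hunif,
    setLIntegral_congr_fun measurableSet_Icc fun x hx => (ENNReal.ofReal_pow hx.1 m).symm,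
    ← ofReal_integral_eq_lintegral_ofReal (continuous_pow m).integrableOn_Icc
      ((ae_restrict_iff' measurableSet_Icc).2 (ae_of_all _ fun x hx => pow_nonneg hx.1 m)),
    integral_Icc_eq_integral_Ioc, ← intervalIntegral.integral_of_le zero_le_one, integral_pow,
    one_pow, zero_pow m.succ_ne_zero, sub_zero, one_div, one_div,
    ENNReal.ofReal_inv_of_pos (by positivity), ENNReal.ofReal_add (by positivity) zero_le_one,
    ENNReal.ofReal_natCast, ENNReal.ofReal_one]

lemma ae_mem_Icc_of_map_eq {Ω : Type*} [MeasurableSpace Ω] {P : Measure Ω}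
    {U : Ω → ℝ} (hU : Measurable U) (hunif : P.map U = volume.restrict (Set.Icc 0 1)) :
    ∀ᵐ ω ∂P, U ω ∈ Set.Icc (0 : ℝ) 1 :=
  (ae_map_iff hU.aemeasurable measurableSet_Icc).1 (hunif ▸ ae_restrict_mem measurableSet_Icc)

section Threateners

variable {Ω : Type*} {X : ℕ → Ω → ℝ} {S : Ω → Finset ℕ} {m n : ℕ}

def beatsUpTo (X : ℕ → Ω → ℝ) (S : Ω → Finset ℕ) (n : ℕ) : Set Ω :=
  {ω | ∀ i ∈ Finset.range (n + 1), i ∈ S ω → X i ω < X 0 ω}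

def countUpTo (S : Ω → Finset ℕ) (n : ℕ) (ω : Ω) : ℕ :=
  ((Finset.range (n + 1)).filter (· ∈ S ω)).card

noncomputable def beatWeight (X : ℕ → Ω → ℝ) (S : Ω → Finset ℕ) (m n : ℕ) : Ω → ℝ≥0∞ :=
  (beatsUpTo X S n).indicator fun ω => ENNReal.ofReal (X 0 ω) ^ (m - countUpTo S n ω)

lemma mem_beatsUpTo_succ {ω : Ω} : ω ∈ beatsUpTo X S (n + 1) ↔
    ω ∈ beatsUpTo X S n ∧ (n + 1 ∈ S ω → X (n + 1) ω < X 0 ω) := by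
  simp only [beatsUpTo, Set.mem_ofPred_eq, Finset.range_add_one (n := n + 1),
    Finset.forall_mem_insert, and_comm]

lemma countUpTo_succ (ω : Ω) :
    countUpTo S (n + 1) ω = countUpTo S n ω + if n + 1 ∈ S ω then 1 else 0 := by
  unfold countUpTo
  rw [Finset.range_add_one (n := n + 1), Finset.filter_insert]
  split_ifs with h
  · exact Finset.card_insert_of_notMem (by simp)
  · rfl

lemma countUpTo_le_card (ω : Ω) : countUpTo S n ω ≤ (S ω).card :=
  Finset.card_le_card fun _ hi => (Finset.mem_filter.1 hi).2

lemma beatWeight_zero (hS0 : ∀ ω, 0 ∉ S ω) :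
    beatWeight X S m 0 = fun ω => ENNReal.ofReal (X 0 ω) ^ m := by
  have hE : beatsUpTo X S 0 = Set.univ := by
    ext ω; simp [beatsUpTo, hS0]
  have hc : ∀ ω, countUpTo S 0 ω = 0 := by
    intro ω; simp [countUpTo, hS0]
  funext ω
  simp [beatWeight, hE, hc]

variable [MeasurableSpace Ω] {ℱ : Filtration ℕ ‹MeasurableSpace Ω›}

lemma measurableSet_mem_of_le (hS0 : ∀ ω, 0 ∉ S ω)
    (hS : ∀ n, MeasurableSet[ℱ n] {ω | n + 1 ∈ S ω}) {i : ℕ} (hi : i ≤ n + 1) :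
    MeasurableSet[ℱ n] {ω | i ∈ S ω} := by
  rcases i with _ | i
  · simp [hS0]
  · exact ℱ.mono (by omega) _ (hS i)

lemma measurable_countUpTo (hS0 : ∀ ω, 0 ∉ S ω)
    (hS : ∀ n, MeasurableSet[ℱ n] {ω | n + 1 ∈ S ω}) :
    Measurable[ℱ n] (countUpTo S n) := by
  rw [show countUpTo S n = fun ω => ∑ i ∈ Finset.range (n + 1), if i ∈ S ω then 1 else 0 from
    funext fun ω => Finset.card_filter _ _]
  exact Finset.measurable_sum _ fun i hi => Measurable.ite
    (measurableSet_mem_of_le hS0 hS (by simp at hi; omega)) measurable_const measurable_const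

lemma measurableSet_beatsUpTo (hX : Adapted ℱ X) (hS0 : ∀ ω, 0 ∉ S ω)
    (hS : ∀ n, MeasurableSet[ℱ n] {ω | n + 1 ∈ S ω}) :
    MeasurableSet[ℱ n] (beatsUpTo X S n) := by
  unfold beatsUpTo
  simp only [Set.ofPred_forall]
  exact Finset.measurableSet_biInter _ fun i hi =>
    (measurableSet_mem_of_le hS0 hS (by simp at hi; omega)).imp
      (measurableSet_lt (hX.measurable_le (by simpa [Nat.lt_succ_iff] using hi))
        (hX.measurable_le n.zero_le))

lemma measurable_beatWeight (hX : Adapted ℱ X) (hS0 : ∀ ω, 0 ∉ S ω)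
    (hS : ∀ n, MeasurableSet[ℱ n] {ω | n + 1 ∈ S ω}) :
    Measurable[ℱ n] (beatWeight X S m n) := by
  refine Measurable.indicator ?_ (measurableSet_beatsUpTo hX hS0 hS)
  exact (ENNReal.measurable_ofReal.comp (hX.measurable_le n.zero_le)).pow
    ((measurable_from_nat (f := (m - ·))).comp (measurable_countUpTo hS0 hS))

lemma lintegral_beatWeight_succ [IsFiniteMeasure P] (hX : Adapted ℱ X) (hS0 : ∀ ω, 0 ∉ S ω)
    (hS : ∀ n, MeasurableSet[ℱ n] {ω | n + 1 ∈ S ω})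
    (hind : Indep (ℱ n) (MeasurableSpace.comap (X (n + 1)) inferInstance) P)
    (hunif : P.map (X (n + 1)) = volume.restrict (Set.Icc 0 1))
    (hX0 : ∀ᵐ ω ∂P, X 0 ω ∈ Set.Icc 0 1) (hcard : ∀ᵐ ω ∂P, (S ω).card ≤ m) :
    ∫⁻ ω, beatWeight X S m (n + 1) ω ∂P = ∫⁻ ω, beatWeight X S m n ω ∂P := by
  set A : Ω → ℝ≥0∞ := {ω | n + 1 ∈ S ω}ᶜ.indicator (beatWeight X S m n)
  set B : Ω → ℝ≥0∞ := ({ω | n + 1 ∈ S ω} ∩ beatsUpTo X S n).indicator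
    fun ω => ENNReal.ofReal (X 0 ω) ^ (m - countUpTo S n ω - 1)
  have hA : Measurable[ℱ n] A := (measurable_beatWeight hX hS0 hS).indicator (hS n).compl
  have hB : Measurable[ℱ n] B :=
    ((ENNReal.measurable_ofReal.comp (hX.measurable_le n.zero_le)).pow
      ((measurable_from_nat (f := (m - · - 1))).comp (measurable_countUpTo hS0 hS))).indicator
      ((hS n).inter (measurableSet_beatsUpTo hX hS0 hS))
  have hBX : Measurable[ℱ n] fun ω => (B ω, X 0 ω) := hB.prodMk (hX.measurable_le n.zero_le)
  have hindB : IndepFun (fun ω => (B ω, X 0 ω)) (X (n + 1)) P :=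
    (IndepFun_iff_Indep _ _ _).2 (indep_of_indep_of_le_left hind (measurable_iff_comap_le.1 hBX))
  have hsucc : ∀ ω, beatWeight X S m (n + 1) ω = A ω + {ω | X (n + 1) ω < X 0 ω}.indicator B ω := by
    intro ω
    by_cases hs : n + 1 ∈ S ω <;> by_cases hE : ω ∈ beatsUpTo X S n <;>
      by_cases hlt : X (n + 1) ω < X 0 ω <;>
      simp [A, B, beatWeight, Set.indicator, mem_beatsUpTo_succ, countUpTo_succ, hs, hE, hlt,
        Nat.sub_sub]
  have hself : ∀ᵐ ω ∂P, beatWeight X S m n ω = A ω + B ω * ENNReal.ofReal (X 0 ω) := by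
    filter_upwards [hcard] with ω hω
    by_cases hs : n + 1 ∈ S ω
    · have hc : countUpTo S n ω + 1 ≤ m := by
        simpa [countUpTo_succ, hs] using (countUpTo_le_card (n := n + 1) ω).trans hω
      by_cases hE : ω ∈ beatsUpTo X S n
      · simp [A, B, beatWeight, hs, hE, pow_sub_one_mul (show m - countUpTo S n ω ≠ 0 by omega)]
      · simp [A, B, beatWeight, hs, hE]
    · simp [A, B, hs]
  calc ∫⁻ ω, beatWeight X S m (n + 1) ω ∂P
      = ∫⁻ ω, A ω ∂P + ∫⁻ ω, {ω | X (n + 1) ω < X 0 ω}.indicator B ω ∂P := by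
        simp only [hsucc]; exact lintegral_add_left (hA.mono (ℱ.le n) le_rfl) _
    _ = ∫⁻ ω, A ω ∂P + ∫⁻ ω, B ω * ENNReal.ofReal (X 0 ω) ∂P := by
        rw [lintegral_indicator_lt_of_indepFun (hB.mono (ℱ.le n) le_rfl) hX.measurable
          hX.measurable hindB hunif hX0]
    _ = ∫⁻ ω, beatWeight X S m n ω ∂P := by
        rw [← lintegral_add_left (hA.mono (ℱ.le n) le_rfl)]
        exact lintegral_congr_ae (hself.mono fun ω h => h.symm)

theorem lintegral_ofReal_pow_le_measure_forall_lt [IsFiniteMeasure P] (hX : Adapted ℱ X)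
    (hS0 : ∀ ω, 0 ∉ S ω) (hS : ∀ n, MeasurableSet[ℱ n] {ω | n + 1 ∈ S ω})
    (hind : ∀ n, Indep (ℱ n) (MeasurableSpace.comap (X (n + 1)) inferInstance) P)
    (hunif : ∀ n, P.map (X (n + 1)) = volume.restrict (Set.Icc 0 1))
    (hX0 : ∀ᵐ ω ∂P, X 0 ω ∈ Set.Icc 0 1) (hcard : ∀ᵐ ω ∂P, (S ω).card ≤ m) :
    ∫⁻ ω, ENNReal.ofReal (X 0 ω) ^ m ∂P ≤ P {ω | ∀ i ∈ S ω, X i ω < X 0 ω} := by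
  have hconst : ∀ n, ∫⁻ ω, beatWeight X S m n ω ∂P = ∫⁻ ω, ENNReal.ofReal (X 0 ω) ^ m ∂P := by
    intro n
    induction n with
    | zero => rw [beatWeight_zero hS0]
    | succ n ih => rw [lintegral_beatWeight_succ hX hS0 hS (hind n) (hunif n) hX0 hcard, ih]
  have hle : ∀ n, ∫⁻ ω, beatWeight X S m n ω ∂P ≤ P (beatsUpTo X S n) := by
    intro n
    rw [← lintegral_indicator_one (ℱ.le n _ (measurableSet_beatsUpTo hX hS0 hS))]
    refine lintegral_mono_ae (hX0.mono fun ω hω => ?_)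
    exact Set.indicator_le_indicator (pow_le_one₀ zero_le (ENNReal.ofReal_le_one.2 hω.2))
  have hiInter : {ω | ∀ i ∈ S ω, X i ω < X 0 ω} = ⋂ n, beatsUpTo X S n := by
    ext ω
    simp only [beatsUpTo, Set.mem_iInter, Set.mem_ofPred_eq, Finset.mem_range]
    exact ⟨fun h n i _ hi => h i hi, fun h i hi => h i i (Nat.lt_succ_self i) hi⟩
  have hanti : Antitone (beatsUpTo X S) := fun a b hab ω hω i hi =>
    hω i (Finset.range_subset_range.2 (by omega) hi)
  rw [hiInter, hanti.measure_iInter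
    (fun n => (ℱ.le n _ (measurableSet_beatsUpTo hX hS0 hS)).nullMeasurableSet)
    ⟨0, measure_ne_top P _⟩]
  exact le_iInf fun n => (hconst n).symm.le.trans (hle n)

end Threateners

lemma indep_natural_comap_succ {Ω : Type*} [MeasurableSpace Ω] {P : Measure Ω}
    {X : ℕ → Ω → ℝ} (hX : iIndepFun X P) (hsm : ∀ i, StronglyMeasurable (X i)) (n : ℕ) :
    Indep (Filtration.natural X hsm n) (MeasurableSpace.comap (X (n + 1)) inferInstance) P := by
  have := indep_iSup_of_disjoint (fun i => (hsm i).measurable.comap_le)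
    ((iIndepFun_iff_iIndep _ _ _).1 hX) (S := Set.Iic n) (T := {n + 1}) (by simp)
  rw [iSup_singleton] at this
  exact this

/-- `X_0, X_1, X_2, …` is an infinite sequence of independent
uniform-`[0,1]` random variables, and `S` is a random finite set of positive integers
with `|S| ≤ m` almost surely such that, for every `i ≥ 1`, the event `{i ∈ S}` is
measurable with respect to the σ-algebra generated by `X_1, …, X_{i-1}` (trivial for
`i = 1`).  Then the probability that `X_0 > X_i` for all `i ∈ S` is at least
`1/(m+1)`. -/
theorem stmt_3
    {Ω : Type*} [MeasurableSpace Ω] (P : Measure Ω) [IsProbabilityMeasure P]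
    (m : ℕ) (X : ℕ → Ω → ℝ)
    (hmeas : ∀ i, Measurable (X i))
    (hindep : iIndepFun X P)
    (hunif : ∀ i, Measure.map (X i) P = volume.restrict (Set.Icc (0 : ℝ) 1))
    (S : Ω → Finset ℕ)
    (hpos : ∀ ω, ∀ i ∈ S ω, 1 ≤ i)
    (hcard : ∀ᵐ ω ∂P, (S ω).card ≤ m)
    (hadapt : ∀ i, 1 ≤ i →
      MeasurableSet[⨆ j ∈ Finset.Ico 1 i, MeasurableSpace.comap (X j) inferInstance]
        {ω | i ∈ S ω}) :
    1 / (m + 1) ≤ P {ω | ∀ i ∈ S ω, X 0 ω > X i ω} := by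
  have hsm : ∀ i, StronglyMeasurable (X i) := fun i => (hmeas i).stronglyMeasurable
  have hpred : ∀ n, MeasurableSet[Filtration.natural X hsm n] {ω | n + 1 ∈ S ω} := by
    intro n
    have hle : ⨆ j ∈ Finset.Ico 1 (n + 1), MeasurableSpace.comap (X j) inferInstance ≤
        Filtration.natural X hsm n :=
      biSup_mono fun j hj => by rw [Finset.mem_Ico] at hj; omega
    exact hle _ (hadapt (n + 1) n.succ_pos)
  rw [← lintegral_ofReal_pow_of_map_eq (hmeas 0) (hunif 0)]
  exact lintegral_ofReal_pow_le_measure_forall_lt (Filtration.stronglyAdapted_natural hsm).adapted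
    (fun ω h => by have := hpos ω 0 h; omega) hpred (indep_natural_comap_succ hindep hsm)
    (fun n => hunif (n + 1)) (ae_mem_Icc_of_map_eq (hmeas 0) (hunif 0)) hcard
end

section
/- Let m be a natural number, let x ∈ [0,1], and let X_1, X_2, ... be an infinite sequence of independent random variables on a probability space, each uniformly distributed on the unit interval [0,1]. Let S be a random finite subset of the positive integers such that (a) |S| ≤ m almost surely, and (b) for every i ≥ 1, the event {i ∈ S} is measurable with respect to the σ-algebra generated by X_1, ..., X_{i-1} (for i = 1, this σ-algebra is trivial). Then the probability of the event {for all i ∈ S, X_i < x} is at least x^m. -/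
/-!
Weight the event that every member of `S` revealed so far (index `≤ n`) lands in `A` by `y` to
the power of the unspent budget `m - |S ∩ [1, n]|`. Whether `n + 1 ∈ S` is decided before
`X (n + 1)` is seen, and `X (n + 1)` is independent of the past and lands in `A` with probability
at least `y`, so the expected weight never decreases; it therefore stays above its initial
value `y ^ m`. The weight is at most the indicator of the event, and these events decrease to
`{∀ i ∈ S, X i ∈ A}`, so continuity from above concludes.
-/

open MeasureTheory ProbabilityTheory Finset
open scoped ENNReal

lemma PNat.coe_le_succ_iff {i : ℕ+} {n : ℕ} :
    (i : ℕ) ≤ n + 1 ↔ (i : ℕ) ≤ n ∨ i = n.succPNat := by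
  rw [← PNat.coe_inj, Nat.succPNat_coe]
  omega

namespace PredictableSelection

variable {Ω β : Type*}

section Selection

variable (S : Ω → Finset ℕ+) (X : ℕ+ → Ω → β) (A : Set β)

def countUpTo (n : ℕ) (ω : Ω) : ℕ := #((S ω).filter fun i : ℕ+ => (i : ℕ) ≤ n)

def allInUpTo (n : ℕ) : Set Ω := {ω | ∀ i ∈ S ω, (i : ℕ) ≤ n → X i ω ∈ A}

lemma countUpTo_zero : countUpTo S 0 = 0 := by
  ext ω
  simp [countUpTo]

lemma countUpTo_succ (n : ℕ) (ω : Ω) :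
    countUpTo S (n + 1) ω = countUpTo S n ω + if n.succPNat ∈ S ω then 1 else 0 := by
  rw [countUpTo, countUpTo, card_filter, card_filter,
    ← sum_ite_eq' (S ω) n.succPNat (fun _ => 1), ← sum_add_distrib]
  refine sum_congr rfl fun i _ => ?_
  by_cases h : i = n.succPNat
  · simp [h]
  · simp [PNat.coe_le_succ_iff, h]

lemma countUpTo_le_card (n : ℕ) (ω : Ω) : countUpTo S n ω ≤ #(S ω) :=
  card_filter_le _ _

lemma allInUpTo_zero : allInUpTo S X A 0 = Set.univ := by
  ext ω
  simp [allInUpTo]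

lemma allInUpTo_succ (n : ℕ) :
    allInUpTo S X A (n + 1) =
      allInUpTo S X A n ∩ {ω | n.succPNat ∈ S ω → X n.succPNat ω ∈ A} := by
  ext ω
  simp only [allInUpTo, PNat.coe_le_succ_iff, Set.mem_inter_iff, Set.mem_ofPred_eq]
  grind

lemma antitone_allInUpTo : Antitone (allInUpTo S X A) :=
  fun _ _ hkn _ hω i hi hik => hω i hi (hik.trans hkn)

lemma iInter_allInUpTo : ⋂ n, allInUpTo S X A n = {ω | ∀ i ∈ S ω, X i ω ∈ A} := by
  ext ω
  simp only [allInUpTo, Set.mem_iInter, Set.mem_ofPred_eq]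
  exact ⟨fun h i hi => h i i hi le_rfl, fun h _ i hi _ => h i hi⟩

variable (y : ℝ≥0∞) (m : ℕ)

-- `m - countUpTo` truncates, which is harmless since `countUpTo ≤ |S| ≤ m` almost surely.
noncomputable def weight (n : ℕ) : Ω → ℝ≥0∞ :=
  (allInUpTo S X A n).indicator fun ω => y ^ (m - countUpTo S n ω)

-- Charging the budget for index `n + 1` in advance makes this `before X (n + 1)`-measurable.
noncomputable def predWeight (n : ℕ) : Ω → ℝ≥0∞ :=
  (allInUpTo S X A n).indicator fun ω => y ^ (m - countUpTo S (n + 1) ω)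

variable {S X A y m}

lemma weight_eq_predWeight_of_notMem {n : ℕ} {ω : Ω} (h : n.succPNat ∉ S ω) :
    weight S X A y m n ω = predWeight S X A y m n ω := by
  classical
  unfold weight predWeight
  simp only [Set.indicator_apply, countUpTo_succ, h, if_false, add_zero]

lemma weight_succ_eq_predWeight_of_notMem {n : ℕ} {ω : Ω} (h : n.succPNat ∉ S ω) :
    weight S X A y m (n + 1) ω = predWeight S X A y m n ω := by
  have hallIn : ω ∈ allInUpTo S X A (n + 1) ↔ ω ∈ allInUpTo S X A n := by
    simp [allInUpTo_succ, h]
  classical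
  unfold weight predWeight
  simp only [Set.indicator_apply, hallIn]

lemma weight_succ_eq_of_mem {n : ℕ} {ω : Ω} (h : n.succPNat ∈ S ω) :
    weight S X A y m (n + 1) ω =
      predWeight S X A y m n ω * (X n.succPNat ⁻¹' A).indicator 1 ω := by
  have hallIn :
      ω ∈ allInUpTo S X A (n + 1) ↔ ω ∈ allInUpTo S X A n ∧ X n.succPNat ω ∈ A := by
    simp [allInUpTo_succ, h]
  classical
  unfold weight predWeight
  by_cases hX : X n.succPNat ω ∈ A <;> simp [Set.indicator_apply, hallIn, hX]

lemma weight_eq_of_mem {n : ℕ} {ω : Ω} (h : n.succPNat ∈ S ω) (hcard : #(S ω) ≤ m) :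
    weight S X A y m n ω = y * predWeight S X A y m n ω := by
  have hexp : m - countUpTo S n ω = m - countUpTo S (n + 1) ω + 1 := by
    have := countUpTo_le_card S (n + 1) ω
    simp only [countUpTo_succ, h, if_true] at this ⊢
    omega
  by_cases hallIn : ω ∈ allInUpTo S X A n <;> simp [weight, predWeight, hallIn, hexp, pow_succ']

lemma weight_le_indicator_allInUpTo (hy : y ≤ 1) (n : ℕ) :
    weight S X A y m n ≤ (allInUpTo S X A n).indicator 1 :=
  fun _ => Set.indicator_le_indicator (pow_le_one₀ zero_le hy)

end Selection

variable [MeasurableSpace β]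

@[reducible] def before (X : ℕ+ → Ω → β) (i : ℕ+) : MeasurableSpace Ω :=
  ⨆ j : ℕ+, ⨆ _ : j < i, MeasurableSpace.comap (X j) inferInstance

section Before

variable (X : ℕ+ → Ω → β)

lemma comap_le_before {i j : ℕ+} (h : j < i) :
    MeasurableSpace.comap (X j) inferInstance ≤ before X i :=
  le_iSup₂ (f := fun j (_ : j < i) => MeasurableSpace.comap (X j) inferInstance) j h

lemma before_mono : Monotone (before X) :=
  fun _ _ hij => iSup₂_le fun _ hj => comap_le_before X (hj.trans_le hij)

lemma before_le [MeasurableSpace Ω] (hmeas : ∀ i, Measurable (X i)) (i : ℕ+) :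
    before X i ≤ ‹MeasurableSpace Ω› :=
  iSup₂_le fun j _ => (hmeas j).comap_le

lemma indep_before [MeasurableSpace Ω] (hmeas : ∀ i, Measurable (X i)) {P : Measure Ω}
    (hindep : iIndepFun X P) (i : ℕ+) :
    Indep (before X i) (MeasurableSpace.comap (X i) inferInstance) P := by
  have := indep_iSup_of_disjoint (fun j => (hmeas j).comap_le) hindep
    (S := {j | j < i}) (T := {i}) (by simp)
  simpa [before] using this

end Before

section Measurability

variable {S : Ω → Finset ℕ+} {X : ℕ+ → Ω → β} {A : Set β}

lemma measurable_countUpTo (hS : ∀ i, MeasurableSet[before X i] {ω | i ∈ S ω}) {i : ℕ+}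
    {n : ℕ} (hn : n ≤ i) : Measurable[before X i] (countUpTo S n) := by
  induction n with
  | zero => rw [countUpTo_zero]; exact measurable_const
  | succ n ih =>
    have hmem : MeasurableSet[before X i] {ω | n.succPNat ∈ S ω} :=
      before_mono X (by simpa [← PNat.coe_le_coe] using hn) _ (hS _)
    simp_rw [funext (countUpTo_succ S n)]
    exact (ih (by omega)).add (Measurable.ite hmem measurable_const measurable_const)

lemma measurableSet_allInUpTo (hA : MeasurableSet A)
    (hS : ∀ i, MeasurableSet[before X i] {ω | i ∈ S ω}) {i : ℕ+} {n : ℕ} (hn : n < i) :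
    MeasurableSet[before X i] (allInUpTo S X A n) := by
  induction n with
  | zero => simp [allInUpTo_zero]
  | succ n ih =>
    have hlt : n.succPNat < i := by simpa [← PNat.coe_lt_coe] using hn
    rw [allInUpTo_succ]
    refine (ih (by omega)).inter (MeasurableSet.imp ?_ ?_)
    · exact before_mono X hlt.le _ (hS _)
    · exact comap_le_before X hlt _ ⟨A, hA, rfl⟩

lemma measurable_predWeight (hA : MeasurableSet A)
    (hS : ∀ i, MeasurableSet[before X i] {ω | i ∈ S ω}) (y : ℝ≥0∞) (m n : ℕ) :
    Measurable[before X n.succPNat] (predWeight S X A y m n) :=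
  ((measurable_from_nat (f := fun k => y ^ (m - k))).comp
    (measurable_countUpTo hS (by simp))).indicator
    (measurableSet_allInUpTo hA hS (by simp))

end Measurability

section Probability

variable [MeasurableSpace Ω] {P : Measure Ω} {S : Ω → Finset ℕ+} {X : ℕ+ → Ω → β}
  {A : Set β} {y : ℝ≥0∞} {m : ℕ}

lemma lintegral_weight_le_succ (hmeas : ∀ i, Measurable (X i)) (hindep : iIndepFun X P)
    (hA : MeasurableSet A) (hS : ∀ i, MeasurableSet[before X i] {ω | i ∈ S ω})
    (hcard : ∀ᵐ ω ∂P, #(S ω) ≤ m) (hy : ∀ i, y ≤ P (X i ⁻¹' A)) (n : ℕ) :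
    ∫⁻ ω, weight S X A y m n ω ∂P ≤ ∫⁻ ω, weight S X A y m (n + 1) ω ∂P := by
  set i := n.succPNat
  set B := {ω | i ∈ S ω}
  set G := predWeight S X A y m n
  have hBm : MeasurableSet B := before_le X hmeas i _ (hS i)
  have hG : Measurable[before X i] G := measurable_predWeight hA hS y m n
  have hBG : Measurable[before X i] (B.indicator G) := hG.indicator (hS i)
  have hE : Measurable[MeasurableSpace.comap (X i) inferInstance]
      ((X i ⁻¹' A).indicator (1 : Ω → ℝ≥0∞)) :=
    measurable_const.indicator ⟨A, hA, rfl⟩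
  rw [← lintegral_add_compl _ hBm, ← lintegral_add_compl (weight S X A y m (n + 1)) hBm]
  refine add_le_add ?_ (setLIntegral_congr_fun hBm.compl fun ω hω => ?_).le
  · calc ∫⁻ ω in B, weight S X A y m n ω ∂P
        = ∫⁻ ω in B, y * G ω ∂P :=
          setLIntegral_congr_fun_ae hBm (hcard.mono fun ω hω hB => weight_eq_of_mem hB hω)
      _ = y * ∫⁻ ω, B.indicator G ω ∂P := by
          rw [lintegral_const_mul y (hG.mono (before_le X hmeas i) le_rfl), lintegral_indicator hBm]
      _ ≤ P (X i ⁻¹' A) * ∫⁻ ω, B.indicator G ω ∂P := by gcongr; exact hy i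
      _ = ∫⁻ ω, B.indicator G ω * (X i ⁻¹' A).indicator 1 ω ∂P := by
          rw [lintegral_mul_eq_lintegral_mul_lintegral_of_independent_measurableSpace
            (before_le X hmeas i) (hmeas i).comap_le (indep_before X hmeas hindep i) hBG hE,
            lintegral_indicator_one ((hmeas i) hA), mul_comm]
      _ = ∫⁻ ω in B, weight S X A y m (n + 1) ω ∂P := by
          simp_rw [← Set.indicator_mul_left]
          rw [lintegral_indicator hBm]
          exact setLIntegral_congr_fun hBm fun ω hB => (weight_succ_eq_of_mem hB).symm
  · rw [weight_eq_predWeight_of_notMem hω, weight_succ_eq_predWeight_of_notMem hω]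

theorem pow_le_measure_forall_mem [IsProbabilityMeasure P] (hmeas : ∀ i, Measurable (X i))
    (hindep : iIndepFun X P) (hA : MeasurableSet A)
    (hS : ∀ i, MeasurableSet[before X i] {ω | i ∈ S ω})
    (hcard : ∀ᵐ ω ∂P, #(S ω) ≤ m) (hy : ∀ i, y ≤ P (X i ⁻¹' A)) :
    y ^ m ≤ P {ω | ∀ i ∈ S ω, X i ω ∈ A} := by
  have hallInMeas (n : ℕ) : MeasurableSet (allInUpTo S X A n) :=
    before_le X hmeas n.succPNat _ (measurableSet_allInUpTo hA hS (by simp))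
  have hbound (n : ℕ) : y ^ m ≤ P (allInUpTo S X A n) :=
    calc y ^ m = ∫⁻ ω, weight S X A y m 0 ω ∂P := by
          simp [weight, countUpTo_zero, allInUpTo_zero]
      _ ≤ ∫⁻ ω, weight S X A y m n ω ∂P :=
        monotone_nat_of_le_succ (lintegral_weight_le_succ hmeas hindep hA hS hcard hy) n.zero_le
      _ ≤ ∫⁻ ω, (allInUpTo S X A n).indicator 1 ω ∂P :=
        lintegral_mono (weight_le_indicator_allInUpTo ((hy 1).trans prob_le_one) n)
      _ = P (allInUpTo S X A n) := lintegral_indicator_one (hallInMeas n)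
  rw [← iInter_allInUpTo, (antitone_allInUpTo S X A).measure_iInter
    (fun n => (hallInMeas n).nullMeasurableSet) ⟨0, measure_ne_top _ _⟩]
  exact le_iInf hbound

lemma measure_preimage_Iio_of_map_eq_uniform {X : Ω → ℝ} (hX : Measurable X)
    (hunif : P.map X = volume.restrict (Set.Icc 0 1)) {x : ℝ} (hx : x ≤ 1) :
    P (X ⁻¹' Set.Iio x) = ENNReal.ofReal x := by
  have hinter : Set.Iio x ∩ Set.Icc 0 1 = Set.Ico 0 x := by
    ext t
    simp only [Set.mem_inter_iff, Set.mem_Iio, Set.mem_Icc, Set.mem_Ico]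
    constructor
    · rintro ⟨htx, ht0, -⟩
      exact ⟨ht0, htx⟩
    · rintro ⟨ht0, htx⟩
      exact ⟨htx, ht0, htx.le.trans hx⟩
  rw [← Measure.map_apply hX measurableSet_Iio, hunif, Measure.restrict_apply measurableSet_Iio,
    hinter, Real.volume_Ico, sub_zero]

end Probability

end PredictableSelection

open PredictableSelection

/-- `x ∈ [0,1]` is fixed, `X_1, X_2, …` (indexed by the positive
integers) is an infinite sequence of independent uniform-`[0,1]` random variables,
and `S` is a random finite set of positive integers with `|S| ≤ m` almost surely such
that, for every `i ≥ 1`, the event `{i ∈ S}` is measurable with respect to the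
σ-algebra generated by `X_1, …, X_{i-1}` (trivial for `i = 1`).  Then the probability
that `X_i < x` for all `i ∈ S` is at least `x^m`. -/
theorem stmt_4
    {Ω : Type*} [MeasurableSpace Ω] (P : Measure Ω) [IsProbabilityMeasure P]
    (m : ℕ) (x : ℝ) (hx : x ∈ Set.Icc (0 : ℝ) 1)
    (X : ℕ+ → Ω → ℝ)
    (hmeas : ∀ i, Measurable (X i))
    (hindep : iIndepFun X P)
    (hunif : ∀ i, Measure.map (X i) P = volume.restrict (Set.Icc (0 : ℝ) 1))
    (S : Ω → Finset ℕ+)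
    (hcard : ∀ᵐ ω ∂P, (S ω).card ≤ m)
    (hadapt : ∀ i : ℕ+,
      MeasurableSet[⨆ j : ℕ+, ⨆ _ : j < i, MeasurableSpace.comap (X j) inferInstance]
        {ω | i ∈ S ω}) :
    ENNReal.ofReal (x ^ m) ≤ P {ω | ∀ i ∈ S ω, X i ω < x} := by
  rw [ENNReal.ofReal_pow hx.1]
  exact pow_le_measure_forall_mem hmeas hindep measurableSet_Iio hadapt hcard
    fun i => (measure_preimage_Iio_of_map_eq_uniform (hmeas i) (hunif i) hx.2).ge
end

section
/- Let G be a finite simple graph and let (X_v), indexed by the vertices v of G, be independent random variables on a probability space, each uniformly distributed on the unit interval [0,1]. Call a vertex v a strict local maximum if X_v > X_u for every neighbor u of v. Then the expected number of strict local maxima equals the sum over all vertices v of 1/(deg(v)+1), where deg(v) denotes the degree of v in G. In particular, if G is d-regular with n vertices, the expected number of strict local maxima is n/(d+1). -/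
/-!
Conditioned on `X v = t`, vertex `v` is a strict local maximum exactly when each of its
`deg v` neighbours, independently, draws a value below `t`; this has probability `t ^ deg v`,
and integrating over `t ∈ [0, 1]` gives `1 / (deg v + 1)`. Linearity of expectation sums these
probabilities over the vertices.
-/

open MeasureTheory ProbabilityTheory Set
open scoped ENNReal

theorem lintegral_natCard_subtype {Ω ι : Type*} [MeasurableSpace Ω] [Fintype ι]
    (μ : Measure Ω) {p : ι → Ω → Prop} (hp : ∀ i, Measurable (p i)) :
    ∫⁻ ω, (Nat.card {i // p i ω} : ℝ≥0∞) ∂μ = ∑ i, μ {ω | p i ω} := by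
  classical
  have hcard (ω : Ω) :
      (Nat.card {i // p i ω} : ℝ≥0∞) = ∑ i, {ω | p i ω}.indicator 1 ω := by
    rw [Nat.card_eq_fintype_card, Fintype.card_subtype, Finset.card_filter]
    push_cast
    simp [indicator_apply]
  simp_rw [hcard]
  rw [lintegral_finsetSum _ fun i _ => measurable_one.indicator (hp i).setOf]
  simp_rw [lintegral_indicator_one (hp _).setOf]

theorem lintegral_ofReal_pow_Icc_zero_one (k : ℕ) :
    ∫⁻ t in Icc (0 : ℝ) 1, ENNReal.ofReal t ^ k = 1 / ((k : ℝ≥0∞) + 1) := by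
  have hpow : ∀ t ∈ Icc (0 : ℝ) 1, ENNReal.ofReal t ^ k = ENNReal.ofReal (t ^ k) :=
    fun t ht => (ENNReal.ofReal_pow ht.1 k).symm
  have hint : ∫ t in (0 : ℝ)..1, t ^ k = 1 / ((k : ℝ) + 1) := by simp [integral_pow]
  rw [setLIntegral_congr_fun measurableSet_Icc hpow, ← ofReal_integral_eq_lintegral_ofReal,
    integral_Icc_eq_integral_Ioc, ← intervalIntegral.integral_of_le zero_le_one, hint,
    ENNReal.ofReal_div_of_pos (by positivity), ENNReal.ofReal_add (by positivity) zero_le_one]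
  · simp
  · exact (continuous_pow k).integrableOn_Icc
  · exact ae_restrict_of_forall_mem measurableSet_Icc fun t ht => pow_nonneg ht.1 k

theorem volume_restrict_Icc_zero_one_Iio {t : ℝ} (ht : t ≤ 1) :
    volume.restrict (Icc (0 : ℝ) 1) (Iio t) = ENNReal.ofReal t := by
  have hIco : Iio t ∩ Icc 0 1 = Ico 0 t := by
    ext x
    simp only [mem_inter_iff, mem_Iio, mem_Icc, mem_Ico]
    grind
  rw [Measure.restrict_apply measurableSet_Iio, hIco, Real.volume_Ico, sub_zero]

namespace ProbabilityTheory.iIndepFun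

variable {Ω ι : Type*} [MeasurableSpace Ω] {P : Measure Ω} [IsProbabilityMeasure P]
  {X : ι → Ω → ℝ}

theorem measure_forall_lt_eq_lintegral (hmeas : ∀ i, Measurable (X i))
    (hindep : iIndepFun X P) {s : Finset ι} {v : ι} (hv : v ∉ s) :
    P {ω | ∀ u ∈ s, X u ω < X v ω}
      = ∫⁻ t, ∏ u ∈ s, P (X u ⁻¹' Iio t) ∂(P.map (X v)) := by
  set Y : Ω → s → ℝ := fun ω u => X u ω
  have hY : Measurable Y := measurable_pi_lambda _ fun u => hmeas u
  have hXY : IndepFun (X v) Y P := by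
    have h := hindep.indepFun_finset {v} s (by simpa using hv) hmeas
    exact h.comp (φ := fun f : ({v} : Finset ι) → ℝ => f ⟨v, Finset.mem_singleton_self v⟩)
      (ψ := id) (measurable_pi_apply _) measurable_id
  set E : Set (ℝ × (s → ℝ)) := {p | ∀ u, p.2 u < p.1}
  have hE : MeasurableSet E := by
    simp only [E, ofPred_forall]
    exact .iInter fun u => measurableSet_lt measurable_snd.eval measurable_fst
  have hslice (t : ℝ) : P.map Y (Prod.mk t ⁻¹' E) = ∏ u ∈ s, P (X u ⁻¹' Iio t) := by
    have hpre : Y ⁻¹' (Prod.mk t ⁻¹' E) = ⋂ u ∈ s, X u ⁻¹' Iio t := by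
      ext ω; simp [E, Y]
    rw [Measure.map_apply hY (measurable_prodMk_left hE), hpre,
      hindep.meas_biInter fun u _ => ⟨Iio t, measurableSet_Iio, rfl⟩]
  have hevent : {ω | ∀ u ∈ s, X u ω < X v ω} = (fun ω => (X v ω, Y ω)) ⁻¹' E := by
    ext ω; simp [E, Y]
  rw [hevent, ← Measure.map_apply ((hmeas v).prodMk hY) hE,
    (indepFun_iff_map_prod_eq_prod_map_map (hmeas v).aemeasurable hY.aemeasurable).1 hXY,
    Measure.prod_apply hE]
  simp_rw [hslice]

theorem measure_forall_lt_of_uniform_s10 (hmeas : ∀ i, Measurable (X i))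
    (hindep : iIndepFun X P)
    (hunif : ∀ i, P.map (X i) = volume.restrict (Icc (0 : ℝ) 1))
    {s : Finset ι} {v : ι} (hv : v ∉ s) :
    P {ω | ∀ u ∈ s, X u ω < X v ω} = 1 / ((s.card : ℝ≥0∞) + 1) := by
  have hcdf (u : ι) (t : ℝ) (ht : t ≤ 1) : P (X u ⁻¹' Iio t) = ENNReal.ofReal t := by
    rw [← Measure.map_apply (hmeas u) measurableSet_Iio, hunif u,
      volume_restrict_Icc_zero_one_Iio ht]
  rw [measure_forall_lt_eq_lintegral hmeas hindep hv, hunif v,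
    ← lintegral_ofReal_pow_Icc_zero_one]
  refine setLIntegral_congr_fun measurableSet_Icc fun t ht => ?_
  rw [Finset.prod_congr rfl fun u _ => hcdf u t ht.2, Finset.prod_const]

end ProbabilityTheory.iIndepFun

/-- in a finite simple graph `G` whose vertices independently draw
uniform-`[0,1]` priorities `X_v`, call `v` a strict local maximum if `X_v > X_u` for
every neighbor `u` of `v`.  The expected number of strict local maxima equals
`∑_v 1/(deg(v)+1)`; in particular if `G` is `d`-regular with `n` vertices it equals
`n/(d+1)`. -/
theorem stmt_10
    {Ω : Type*} [MeasurableSpace Ω] (P : Measure Ω) [IsProbabilityMeasure P]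
    {V : Type*} [Fintype V] (G : SimpleGraph V) [DecidableRel G.Adj]
    (X : V → Ω → ℝ)
    (hmeas : ∀ v, Measurable (X v))
    (hindep : iIndepFun X P)
    (hunif : ∀ v, Measure.map (X v) P = volume.restrict (Set.Icc (0 : ℝ) 1)) :
    (∫⁻ ω, (Nat.card {v : V // ∀ u, G.Adj v u → X v ω > X u ω} : ℝ≥0∞) ∂P
        = ∑ v : V, 1 / ((G.degree v : ℝ≥0∞) + 1))
      ∧ ∀ d : ℕ, (∀ v : V, G.degree v = d) →
          ∫⁻ ω, (Nat.card {v : V // ∀ u, G.Adj v u → X v ω > X u ω} : ℝ≥0∞) ∂P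
            = (Fintype.card V : ℝ≥0∞) / ((d : ℝ≥0∞) + 1) := by
  have hmax (v : V) :
      P {ω | ∀ u, G.Adj v u → X v ω > X u ω} = 1 / ((G.degree v : ℝ≥0∞) + 1) := by
    rw [← G.card_neighborFinset_eq_degree,
      ← hindep.measure_forall_lt_of_uniform_s10 hmeas hunif (G.notMem_neighborFinset_self v)]
    simp
  have hexp :
      ∫⁻ ω, (Nat.card {v : V // ∀ u, G.Adj v u → X v ω > X u ω} : ℝ≥0∞) ∂P
        = ∑ v : V, 1 / ((G.degree v : ℝ≥0∞) + 1) := by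
    rw [lintegral_natCard_subtype P (p := fun v ω => ∀ u, G.Adj v u → X v ω > X u ω)
      fun v => Measurable.forall fun u =>
        measurable_const.imp (measurableSet_lt (hmeas u) (hmeas v)).mem]
    exact Finset.sum_congr rfl fun v _ => hmax v
  refine ⟨hexp, fun d hd => ?_⟩
  simp only [hexp, hd, Finset.sum_const, Finset.card_univ, nsmul_eq_mul, mul_one_div]
end
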